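/- For real a with |a| < 1, the integral (1/2π)∫₀^{2π} (1 - a·cos θ)·log(1 - a·cos θ) dθ equals 1 - √(1-a²) + log((1 + √(1-a²))/2). -/

import Mathlib

/-!
Differentiate in `a` under the integral sign. The derivative `-∫ cos θ (log (1 - a cos θ) + 1)`
is elementary: integrating by parts reduces it to `-∫ (cos θ - a) / (1 - a cos θ)`, which the
half-angle substitution evaluates to `2π a / (1 + √(1 - a²))`. This is also the derivative of
`2π` times the right-hand side, and both sides vanish at `a = 0`.
-/

open Real Set MeasureTheory

lemma abs_mul_cos_le_abs (b t : ℝ) : |b * cos t| ≤ |b| := by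
  rw [abs_mul]
  exact mul_le_of_le_one_right (abs_nonneg b) (abs_cos_le_one t)

lemma abs_log_le_neg_log_one_sub {c y : ℝ} (hc : c < 1) (hy : |y - 1| ≤ c) :
    |log y| ≤ -log (1 - c) := by
  obtain ⟨hy₁, hy₂⟩ := abs_le.mp hy
  have hlog_le : log (1 - c) ≤ -c := by linarith [log_le_sub_one_of_pos (sub_pos.mpr hc)]
  rw [abs_le]
  constructor
  · linarith [log_le_log (sub_pos.mpr hc) (by linarith : 1 - c ≤ y)]
  · linarith [log_le_sub_one_of_pos (by linarith : 0 < y)]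

section

variable {b : ℝ}

lemma one_sub_mul_cos_pos (hb : |b| < 1) (t : ℝ) : 0 < 1 - b * cos t := by
  linarith [le_abs_self (b * cos t), abs_mul_cos_le_abs b t]

lemma one_sub_sq_pos (hb : |b| < 1) : 0 < 1 - b ^ 2 :=
  sub_pos.mpr ((sq_lt_one_iff_abs_lt_one b).mpr hb)

lemma sqrt_one_sub_sq_pos (hb : |b| < 1) : 0 < √(1 - b ^ 2) :=
  sqrt_pos.mpr (one_sub_sq_pos hb)

lemma sq_sqrt_one_sub_sq (hb : |b| < 1) : √(1 - b ^ 2) ^ 2 = 1 - b ^ 2 :=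
  sq_sqrt (one_sub_sq_pos hb).le

/-- The half-angle substitution, with the arctangent's argument rewritten so that its denominator
never vanishes: a primitive of `1 / (1 - b cos t)` valid on all of `ℝ`. -/
noncomputable def invOneSubMulCosPrimitive (b t : ℝ) : ℝ :=
  (t + 2 * arctan (b * sin t / (1 + √(1 - b ^ 2) - b * cos t))) / √(1 - b ^ 2)

lemma hasDerivAt_invOneSubMulCosPrimitive (hb : |b| < 1) (t : ℝ) :
    HasDerivAt (invOneSubMulCosPrimitive b) (1 / (1 - b * cos t)) t := by
  have hs := sqrt_one_sub_sq_pos hb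
  have hs2 := sq_sqrt_one_sub_sq hb
  set s := √(1 - b ^ 2)
  have hpos := one_sub_mul_cos_pos hb t
  have hden : 0 < 1 + s - b * cos t := by linarith
  have hquot : HasDerivAt (fun t => b * sin t / (1 + s - b * cos t))
      ((b * cos t * (1 + s - b * cos t) - b * sin t * (b * sin t)) /
        (1 + s - b * cos t) ^ 2) t :=
    ((hasDerivAt_sin t).const_mul b).div
      (by simpa using ((hasDerivAt_cos t).const_mul b).const_sub (1 + s)) hden.ne'
  have harctan := (hasDerivAt_arctan _).comp t hquot
  refine (((hasDerivAt_id t).add (harctan.const_mul 2)).div_const s).congr_deriv ?_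
  have hsin := sin_sq_add_cos_sq t
  field_simp
  linear_combination (-(1 + s - b * cos t)) * hs2 + (-(1 + s - b * cos t) * b ^ 2) * hsin

lemma continuous_log_one_sub_mul_cos (hb : |b| < 1) :
    Continuous fun t => log (1 - b * cos t) :=
  (continuous_const.sub (continuous_const.mul continuous_cos)).log
    fun t => (one_sub_mul_cos_pos hb t).ne'

lemma hasDerivAt_log_one_sub_mul_cos (hb : |b| < 1) (t : ℝ) :
    HasDerivAt (fun t => log (1 - b * cos t)) (b * sin t / (1 - b * cos t)) t :=
  (by simpa using ((hasDerivAt_cos t).const_mul b).const_sub 1 :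
    HasDerivAt (fun t => 1 - b * cos t) (b * sin t) t).log (one_sub_mul_cos_pos hb t).ne'

lemma integral_cos_mul_log_one_sub_mul_cos_add_one (hb : |b| < 1) :
    ∫ θ in (0)..(2 * π), cos θ * (log (1 - b * cos θ) + 1) =
      -(2 * π * b / (1 + √(1 - b ^ 2))) := by
  rcases eq_or_ne b 0 with rfl | hb₀
  · simp
  have hs := sqrt_one_sub_sq_pos hb
  have hs2 := sq_sqrt_one_sub_sq hb
  -- by parts, `cos t * (log (1 - b cos t) + 1) - (sin t * log (1 - b cos t))'` is
  -- `(cos t - b) / (1 - b cos t) = ((1 - b²) / (1 - b cos t) - 1) / b`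
  have hprim (t : ℝ) : HasDerivAt
      (fun t => sin t * log (1 - b * cos t) + (1 - b ^ 2) / b * invOneSubMulCosPrimitive b t
        - t / b)
      (cos t * (log (1 - b * cos t) + 1)) t := by
    refine ((((hasDerivAt_sin t).mul (hasDerivAt_log_one_sub_mul_cos hb t)).add
      ((hasDerivAt_invOneSubMulCosPrimitive hb t).const_mul _)).sub
      ((hasDerivAt_id t).div_const b)).congr_deriv ?_
    have : 1 - cos t * b ≠ 0 := by rw [mul_comm]; exact (one_sub_mul_cos_pos hb t).ne'
    field_simp
    linear_combination b ^ 2 * sin_sq_add_cos_sq t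
  rw [intervalIntegral.integral_eq_sub_of_hasDerivAt (fun t _ => hprim t)
    ((continuous_cos.mul ((continuous_log_one_sub_mul_cos hb).add continuous_const)
      ).intervalIntegrable _ _)]
  simp [invOneSubMulCosPrimitive]
  field_simp
  linear_combination -hs2

lemma abs_cos_mul_log_one_sub_mul_cos_add_one_le {c : ℝ} (hc : c < 1) (hb : |b| ≤ c) (t : ℝ) :
    |cos t * (log (1 - b * cos t) + 1)| ≤ 1 - log (1 - c) := by
  have hlog : |log (1 - b * cos t)| ≤ -log (1 - c) :=
    abs_log_le_neg_log_one_sub hc (by simpa using (abs_mul_cos_le_abs b t).trans hb)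
  rw [abs_mul]
  calc |cos t| * |log (1 - b * cos t) + 1| ≤ 1 * (|log (1 - b * cos t)| + |1|) :=
        mul_le_mul (abs_cos_le_one t) (abs_add_le _ _) (abs_nonneg _) zero_le_one
    _ ≤ 1 - log (1 - c) := by rw [abs_one]; linarith

lemma hasDerivAt_integral_one_sub_mul_cos_mul_log (hb : |b| < 1) :
    HasDerivAt (fun x => ∫ θ in (0)..(2 * π), (1 - x * cos θ) * log (1 - x * cos θ))
      (2 * π * b / (1 + √(1 - b ^ 2))) b := by
  obtain ⟨c, hbc, hc⟩ := exists_between hb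
  have hball : Ioo (-c) c ∈ nhds b :=
    Ioo_mem_nhds (by linarith [neg_abs_le b]) (by linarith [le_abs_self b])
  have hsmall {x : ℝ} (hx : x ∈ Ioo (-c) c) : |x| < 1 := (abs_lt.mpr hx).trans hc
  have hcont {x : ℝ} (hx : |x| < 1) :
      Continuous fun θ => (1 - x * cos θ) * log (1 - x * cos θ) :=
    (continuous_const.sub (continuous_const.mul continuous_cos)).mul
      (continuous_log_one_sub_mul_cos hx)
  have hderiv := intervalIntegral.hasDerivAt_integral_of_dominated_loc_of_deriv_le
    (F' := fun x θ => -(cos θ * (log (1 - x * cos θ) + 1)))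
    (μ := volume) (a := 0) (b := 2 * π) (bound := fun _ => 1 - log (1 - c)) hball
    (Filter.eventually_of_mem hball fun x hx => (hcont (hsmall hx)).aestronglyMeasurable)
    ((hcont hb).intervalIntegrable _ _)
    ((continuous_cos.mul ((continuous_log_one_sub_mul_cos hb).add continuous_const)
      ).neg.aestronglyMeasurable)
    (ae_of_all _ fun t _ x hx => by
      rw [norm_neg, norm_eq_abs]
      exact abs_cos_mul_log_one_sub_mul_cos_add_one_le hc (abs_lt.mpr hx).le t)
    intervalIntegrable_const
    (ae_of_all _ fun t _ x hx => by
      have hlin : HasDerivAt (fun y => 1 - y * cos t) (-cos t) x := by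
        simpa using ((hasDerivAt_id x).mul_const (cos t)).const_sub 1
      refine (hlin.mul (hlin.log (one_sub_mul_cos_pos (hsmall hx) t).ne')).congr_deriv ?_
      have : 1 - cos t * x ≠ 0 := by rw [mul_comm]; exact (one_sub_mul_cos_pos (hsmall hx) t).ne'
      field_simp
      ring)
  rw [intervalIntegral.integral_neg, integral_cos_mul_log_one_sub_mul_cos_add_one hb,
    neg_neg] at hderiv
  exact hderiv.2

lemma hasDerivAt_one_sub_sqrt_add_log_one_add_sqrt (hb : |b| < 1) :
    HasDerivAt (fun x => 1 - √(1 - x ^ 2) + log ((1 + √(1 - x ^ 2)) / 2))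
      (b / (1 + √(1 - b ^ 2))) b := by
  have hs := sqrt_one_sub_sq_pos hb
  have hsqrt : HasDerivAt (fun x => √(1 - x ^ 2)) (-b / √(1 - b ^ 2)) b := by
    convert ((hasDerivAt_pow 2 b).const_sub 1).sqrt (one_sub_sq_pos hb).ne' using 1
    field_simp
    ring
  refine ((hsqrt.const_sub 1).add
    ((hsqrt.const_add 1).div_const 2 |>.log (by positivity))).congr_deriv ?_
  field_simp
  ring

end

theorem gw_entropy_integral (a : ℝ) (ha : |a| < 1) :
    (1 / (2 * Real.pi)) * ∫ θ in (0 : ℝ)..(2 * Real.pi),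
        (1 - a * Real.cos θ) * Real.log (1 - a * Real.cos θ)
      = 1 - Real.sqrt (1 - a ^ 2) + Real.log ((1 + Real.sqrt (1 - a ^ 2)) / 2) := by
  let I (x : ℝ) := ∫ θ in (0)..(2 * π), (1 - x * cos θ) * log (1 - x * cos θ)
  let R (x : ℝ) := 2 * π * (1 - √(1 - x ^ 2) + log ((1 + √(1 - x ^ 2)) / 2))
  have hI {x : ℝ} (hx : x ∈ Metric.ball 0 1) := hasDerivAt_integral_one_sub_mul_cos_mul_log
    (by simpa using hx)
  have hR {x : ℝ} (hx : x ∈ Metric.ball 0 1) :=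
    (hasDerivAt_one_sub_sqrt_add_log_one_add_sqrt (by simpa using hx)).const_mul (2 * π)
  have hIR : I a = R a :=
    Metric.isOpen_ball.eqOn_of_deriv_eq (convex_ball 0 1).isPreconnected
      (fun x hx => (hI hx).differentiableAt.differentiableWithinAt)
      (fun x hx => (hR hx).differentiableAt.differentiableWithinAt)
      (fun x hx => by rw [(hI hx).deriv, (hR hx).deriv]; ring)
      (Metric.mem_ball_self one_pos) (by simp) (by simpa using ha)
  simp only [I, R] at hIR
  rw [hIR]
  field_simp
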